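/- Let r_k = r·χ_k be the truncated running cost (χ_k a smooth cutoff equal to 1 on B_k, 0 outside B_{k+1}, 0 ≤ χ_k ≤ 1), let u^k_α(θ,x) be the value u^k_α(θ,x) = inf_v E^v_x[ exp( θ ∫_0^∞ e^{−αt} r_k(X_t,v_t) dt ) ], and set φ^k_α = (1/θ) ln u^k_α. Then ‖α φ^k_α‖_∞ + ‖α θ ∂φ^k_α/∂θ‖_∞ ≤ 3 ‖r_k‖_∞ for all 0 < α < 1 and 0 < θ ≤ 1. -/

import Mathlib

open MeasureTheory ProbabilityTheory Set Filter Matrix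
open scoped NNReal ENNReal

noncomputable section

namespace RS

/-! ## Basic geometric and analytic setup -/

/-- The state space `ℝ^d`. -/
abbrev V (d : ℕ) := Fin d → ℝ

variable {d : ℕ} {U : Type}

/-- Euclidean inner product on `ℝ^d`. -/
def dot (x y : V d) : ℝ := ∑ i, x i * y i

/-- Euclidean norm on `ℝ^d`. -/
def eNorm (x : V d) : ℝ := Real.sqrt (∑ i, x i ^ 2)

/-- The open positive orthant `D`. -/
def orthant (d : ℕ) : Set (V d) := {x | ∀ i, 0 < x i}

/-- The closed positive orthant `D̄`. -/
def Dbar (d : ℕ) : Set (V d) := closure (orthant d)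

/-- The boundary `∂D` of the positive orthant. -/
def bdry (d : ℕ) : Set (V d) := frontier (orthant d)

/-- Classical partial derivative in the `i`-th coordinate direction. -/
def pd (i : Fin d) (f : V d → ℝ) (x : V d) : ℝ := fderiv ℝ f x (Pi.single i 1)

/-- Classical gradient. -/
def grad (f : V d → ℝ) (x : V d) : V d := fun i => pd i f x

/-- Classical second partial derivative. -/
def pd2 (i j : Fin d) (f : V d → ℝ) (x : V d) : ℝ := pd i (fun y => pd j f y) x

/-- The diffusion matrix `a = σ σᵀ`. -/
def amat (σm : V d → Matrix (Fin d) (Fin d) ℝ) (x : V d) : Matrix (Fin d) (Fin d) ℝ :=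
  σm x * (σm x)ᵀ

/-- The controlled generator `L f(x,v) = b(x,v)·∇f(x) + ½ tr(a(x) ∇²f(x))`. -/
def genL (b : V d → U → V d) (a : V d → Matrix (Fin d) (Fin d) ℝ)
    (f : V d → ℝ) (x : V d) (u : U) : ℝ :=
  dot (b x u) (grad f x) + (1 / 2) * ∑ i, ∑ j, a x i j * pd2 i j f x

open Classical in
/-- The Lebesgue–Stieltjes measure of a monotone continuous function (junk value `0`
otherwise). -/
def stieltjesMeasure (g : ℝ → ℝ) : Measure ℝ :=
  if h : Monotone g ∧ Continuous g then
    StieltjesFunction.measure ⟨g, h.1, fun _ => h.2.continuousWithinAt⟩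
  else 0

/-- The Stieltjes integral `∫_0^t f(s) dg(s)`. -/
def sInt (g f : ℝ → ℝ) (t : ℝ) : ℝ := ∫ s in Ioc (0 : ℝ) t, f s ∂(stieltjesMeasure g)

/-! ## Standing assumptions -/

variable [MetricSpace U] [CompactSpace U] [MeasurableSpace U] [BorelSpace U]

/-- Assumption (A1): bounded continuous drift, Lipschitz in the state uniformly in the
control; `C²` bounded diffusion coefficient with `a = σσᵀ` uniformly elliptic. -/
structure A1 (b : V d → U → V d) (σm : V d → Matrix (Fin d) (Fin d) ℝ) : Prop where
  b_bdd : ∃ C, ∀ x u i, |b x u i| ≤ C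
  b_cont : Continuous fun p : V d × U => b p.1 p.2
  b_lip : ∃ L : ℝ≥0, ∀ u, LipschitzWith L fun x => b x u
  σ_smooth : ∀ i j, ContDiff ℝ 2 fun x => σm x i j
  σ_bdd : ∃ C, ∀ x i j, |σm x i j| ≤ C
  elliptic : ∃ δ > (0 : ℝ), ∀ x ∈ Dbar d, ∀ y : V d,
    δ * ∑ i, y i ^ 2 ≤ ∑ i, ∑ j, amat σm x i j * y i * y j

/-- Assumption (A2): `C²_b` reflection field together with the symmetric-matrix
compatibility condition on the boundary of the orthant. -/
structure A2 (γ : V d → V d) : Prop where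
  smooth : ∀ i, ContDiff ℝ 2 fun x => γ x i
  bdd : ∃ C, ∀ x i, |γ x i| ≤ C
  compat : ∃ M : V d → Matrix (Fin d) (Fin d) ℝ,
    (∀ x, (M x).IsSymm) ∧ (∀ i j, Continuous fun x => M x i j) ∧
    (∃ C, ∀ x i j, |M x i j| ≤ C) ∧
    (∃ δ₁ > (0 : ℝ), ∀ x y : V d, δ₁ * ∑ i, y i ^ 2 ≤ ∑ i, ∑ j, y i * M x i j * y j) ∧
    (∃ C₀ > (0 : ℝ), ∀ x ∈ bdry d, ∀ y ∈ Dbar d,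
      0 ≤ C₀ * ∑ i, (x i - y i) ^ 2 + ∑ i, ∑ j, M x i j * (x i - y i) * γ x j)

/-- Assumptions on the running cost: nonnegative, bounded (with supremum `R`), jointly
continuous and Lipschitz in the state uniformly in the control. -/
structure CostA (r : V d → U → ℝ) (R : ℝ) : Prop where
  nonneg : ∀ x u, 0 ≤ r x u
  cont : Continuous fun p : V d × U => r p.1 p.2
  lip : ∃ L : ℝ≥0, ∀ u, LipschitzWith L fun x => r x u
  sup : IsLUB (range fun p : V d × U => r p.1 p.2) R

/-! ## Wiener processes and the reflected SDE -/

/-- `W` is a `d`-dimensional `ℱ`-Wiener process on `(Ω, μ)`. -/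
structure IsWiener {Ω : Type} [mΩ : MeasurableSpace Ω] (μ : Measure Ω)
    (ℱ : Filtration ℝ mΩ) (W : ℝ → Ω → V d) : Prop where
  adapted : ∀ t : ℝ, 0 ≤ t → Measurable[ℱ t] (W t)
  init : ∀ᵐ ω ∂μ, W 0 ω = 0
  contPaths : ∀ᵐ ω ∂μ, ∀ i, Continuous fun t => W t ω i
  incr_law : ∀ s t : ℝ, 0 ≤ s → s ≤ t →
    Measure.map (fun ω i => W t ω i - W s ω i) μ =
      Measure.pi fun _ : Fin d => gaussianReal 0 (Real.toNNReal (t - s))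
  incr_indep : ∀ s t : ℝ, 0 ≤ s → s ≤ t →
    Indep (MeasurableSpace.comap (fun ω i => W t ω i - W s ω i) inferInstance) (ℱ s) μ

/-- Left-endpoint Riemann (Itô) sums `∑ σ(X_{t_k})·(W_{t_{k+1}} − W_{t_k})` along the
dyadic partition of `[0,t]`. -/
def itoSum {Ω : Type} (σm : V d → Matrix (Fin d) (Fin d) ℝ) (X W : ℝ → Ω → V d)
    (t : ℝ) (n : ℕ) (ω : Ω) (i : Fin d) : ℝ :=
  ∑ k ∈ Finset.range (2 ^ n), ∑ j,
    σm (X (t * (k : ℝ) / 2 ^ n) ω) i j *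
      (W (t * ((k : ℝ) + 1) / 2 ^ n) ω j - W (t * (k : ℝ) / 2 ^ n) ω j)

/-- `(X, ξ)` solves the controlled reflected SDE
`dX = b(X,v)dt + σ(X)dW − γ(X)dξ` in `Ḡ`, for the control `v`, driven by the Wiener
process `W`, with initial condition `x`.  The stochastic integral is characterised as the
`L²(μ)`-limit of left-endpoint Riemann sums. -/
structure SolvesRSDE (G : Set (V d)) (b : V d → U → V d)
    (σm : V d → Matrix (Fin d) (Fin d) ℝ) (γ : V d → V d)
    {Ω : Type} [mΩ : MeasurableSpace Ω] (μ : Measure Ω) (ℱ : Filtration ℝ mΩ)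
    (v : ℝ → Ω → U) (W X : ℝ → Ω → V d) (ξ : ℝ → Ω → ℝ) (x : V d) : Prop where
  wiener : IsWiener μ ℱ W
  v_meas : ∀ t : ℝ, 0 ≤ t → Measurable[ℱ t] (v t)
  X_meas : ∀ t : ℝ, 0 ≤ t → Measurable[ℱ t] (X t)
  ξ_meas : ∀ t : ℝ, 0 ≤ t → Measurable[ℱ t] (ξ t)
  X_cont : ∀ᵐ ω ∂μ, ∀ i, Continuous fun t => X t ω i
  ξ_cont : ∀ᵐ ω ∂μ, Continuous fun t => ξ t ω
  X_mem : ∀ᵐ ω ∂μ, ∀ t : ℝ, 0 ≤ t → X t ω ∈ closure G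
  X_init : ∀ᵐ ω ∂μ, X 0 ω = x
  ξ_init : ∀ᵐ ω ∂μ, ξ 0 ω = 0
  ξ_mono : ∀ᵐ ω ∂μ, MonotoneOn (fun t => ξ t ω) (Ici 0)
  ξ_flat : ∀ᵐ ω ∂μ, ∀ s t : ℝ, 0 ≤ s → s ≤ t →
    (∀ u' ∈ Icc s t, X u' ω ∉ frontier G) → ξ t ω = ξ s ω
  eq_sde : ∀ t : ℝ, 0 ≤ t → ∀ i, Tendsto (fun n =>
      ∫⁻ ω, ENNReal.ofReal ((X t ω i - x i
        - (∫ s in Icc (0 : ℝ) t, b (X s ω) (v s ω) i)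
        + sInt (fun s => ξ s ω) (fun s => γ (X s ω) i) t
        - itoSum σm X W t n ω i) ^ 2) ∂μ) atTop (nhds 0)

/-- An admissible controlled system: a filtered probability space carrying a control, a
Wiener process and a solution pair `(X, ξ)` of the reflected SDE in `Ḡ` started at `x`. -/
structure ControlSys (G : Set (V d)) (b : V d → U → V d)
    (σm : V d → Matrix (Fin d) (Fin d) ℝ) (γ : V d → V d) (x : V d) where
  Ω : Type
  mΩ : MeasurableSpace Ω
  μ : @Measure Ω mΩ
  prob : @IsProbabilityMeasure Ω mΩ μ
  ℱ : Filtration ℝ mΩ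
  v : ℝ → Ω → U
  W : ℝ → Ω → V d
  X : ℝ → Ω → V d
  ξ : ℝ → Ω → ℝ
  sol : SolvesRSDE G b σm γ μ ℱ v W X ξ x

attribute [instance] ControlSys.mΩ

/-! ## Feedback controls -/

/-- A feedback-control map is causal: its value at time `t` depends only on the paths up
to time `t`. -/
def Causal (vb : ℝ → (ℝ → V d) → (ℝ → ℝ) → U) : Prop :=
  ∀ t f₁ f₂ g₁ g₂, (∀ s ≤ t, f₁ s = f₂ s) → (∀ s ≤ t, g₁ s = g₂ s) → vb t f₁ g₁ = vb t f₂ g₂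

/-- `v` is the feedback control induced by the feedback map `vb` and the pair `(X, ξ)`. -/
def IsFeedbackOf {Ω : Type} (vb : ℝ → (ℝ → V d) → (ℝ → ℝ) → U)
    (v : ℝ → Ω → U) (X : ℝ → Ω → V d) (ξ : ℝ → Ω → ℝ) : Prop :=
  ∀ t ω, v t ω = vb t (fun s => X s ω) (fun s => ξ s ω)

variable {G : Set (V d)} {b : V d → U → V d} {σm : V d → Matrix (Fin d) (Fin d) ℝ}
  {γ : V d → V d} {x : V d}

/-- The control of the system `sys` is a feedback control. -/
def IsFeedbackSys (sys : ControlSys G b σm γ x) : Prop :=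
  ∃ vb, Causal vb ∧ (∀ t : ℝ, Measurable fun p : (ℝ → V d) × (ℝ → ℝ) => vb t p.1 p.2) ∧
    IsFeedbackOf vb sys.v sys.X sys.ξ

/-- The control of the system `sys` is the stationary Markov control `vm`. -/
def IsMarkovSys (vm : V d → U) (sys : ControlSys G b σm γ x) : Prop :=
  ∀ t ω, sys.v t ω = vm (sys.X t ω)

/-! ## Cost criteria -/

/-- The multiplicative `α`-discounted risk-sensitive cost
`E[exp(θ ∫_0^∞ e^{−αt} r(X_t, v_t) dt)]`. -/
def discCost (sys : ControlSys G b σm γ x) (r : V d → U → ℝ) (α θ : ℝ) : ℝ :=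
  ∫ ω, Real.exp (θ * ∫ t in Ici (0 : ℝ),
    Real.exp (-α * t) * r (sys.X t ω) (sys.v t ω)) ∂sys.μ

/-- The discounted risk-sensitive value function `u_α(θ, x)`: infimum of the
multiplicative discounted cost over all admissible controlled systems started at `x`. -/
def discValue (G : Set (V d)) (b : V d → U → V d) (σm : V d → Matrix (Fin d) (Fin d) ℝ)
    (γ : V d → V d) (r : V d → U → ℝ) (α θ : ℝ) (x : V d) : ℝ :=
  sInf {c | ∃ sys : ControlSys G b σm γ x, c = discCost sys r α θ}

/-- The ergodic risk-sensitive cost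
`limsup_{T→∞} (1/(θT)) ln E[exp(θ ∫_0^T r(X_t, v_t) dt)]`. -/
def ergCost (sys : ControlSys G b σm γ x) (r : V d → U → ℝ) (θ : ℝ) : ℝ :=
  limsup (fun T : ℝ => (1 / (θ * T)) * Real.log (∫ ω, Real.exp
    (θ * ∫ t in Icc (0 : ℝ) T, r (sys.X t ω) (sys.v t ω)) ∂sys.μ)) atTop

/-- The optimal ergodic risk-sensitive value `β` for initial state `x`. -/
def ergValue (G : Set (V d)) (b : V d → U → V d) (σm : V d → Matrix (Fin d) (Fin d) ℝ)
    (γ : V d → V d) (r : V d → U → ℝ) (θ : ℝ) (x : V d) : ℝ :=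
  sInf {c | ∃ sys : ControlSys G b σm γ x, c = ergCost sys r θ}

/-! ## Martingales and the constrained martingale problem -/

/-- `M` is a martingale (for nonnegative times) with respect to `ℱ` and `μ`. -/
def IsMartingaleFrom {Ω : Type} [mΩ : MeasurableSpace Ω] (μ : Measure Ω)
    (ℱ : Filtration ℝ mΩ) (M : ℝ → Ω → ℝ) : Prop :=
  (∀ t : ℝ, 0 ≤ t → Integrable (M t) μ ∧ Measurable[ℱ t] (M t)) ∧
    ∀ s t : ℝ, 0 ≤ s → s ≤ t → μ[M t|ℱ s] =ᵐ[μ] M s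

/-- The test class `H = {f ∈ C²_0(D̄) : ∇f·γ ≥ 0 on ∂D}`. -/
def Hclass (d : ℕ) (γ : V d → V d) : Set (V d → ℝ) :=
  {f | ContDiff ℝ 2 f ∧ HasCompactSupport f ∧ ∀ x ∈ bdry d, 0 ≤ dot (grad f x) (γ x)}

/-- `(X, ξ)` solves the constrained controlled martingale problem for the reflected
SDE in the orthant, for the control `v` and initial condition `x`. -/
structure SolvesCMP (b : V d → U → V d) (a : V d → Matrix (Fin d) (Fin d) ℝ)
    (γ : V d → V d) {Ω : Type} [mΩ : MeasurableSpace Ω] (μ : Measure Ω)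
    (ℱ : Filtration ℝ mΩ) (v : ℝ → Ω → U) (X : ℝ → Ω → V d) (ξ : ℝ → Ω → ℝ)
    (x : V d) : Prop where
  v_meas : ∀ t : ℝ, 0 ≤ t → Measurable[ℱ t] (v t)
  X_meas : ∀ t : ℝ, 0 ≤ t → Measurable[ℱ t] (X t)
  ξ_meas : ∀ t : ℝ, 0 ≤ t → Measurable[ℱ t] (ξ t)
  X_cont : ∀ᵐ ω ∂μ, ∀ i, Continuous fun t => X t ω i
  ξ_cont : ∀ᵐ ω ∂μ, Continuous fun t => ξ t ω
  X_mem : ∀ᵐ ω ∂μ, ∀ t : ℝ, 0 ≤ t → X t ω ∈ Dbar d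
  X_init : ∀ᵐ ω ∂μ, X 0 ω = x
  ξ_init : ∀ᵐ ω ∂μ, ξ 0 ω = 0
  ξ_mono : ∀ᵐ ω ∂μ, MonotoneOn (fun t => ξ t ω) (Ici 0)
  ξ_bdry : ∀ᵐ ω ∂μ, ∀ t : ℝ, 0 ≤ t →
    sInt (fun s => ξ s ω) (fun s => (bdry d).indicator (fun _ => (1 : ℝ)) (X s ω)) t = ξ t ω
  mart : ∀ f ∈ Hclass d γ, IsMartingaleFrom μ ℱ fun t ω =>
    f (X t ω) - (∫ s in Icc (0 : ℝ) t, genL b a f (X s ω) (v s ω))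
      + sInt (fun s => ξ s ω) (fun s => dot (grad f (X s ω)) (γ (X s ω))) t

/-- Two processes agree in law (equality of all finite-dimensional distributions). -/
def EqLaw {Ω Ω' β : Type} [MeasurableSpace Ω] [MeasurableSpace Ω'] [MeasurableSpace β]
    (μ : Measure Ω) (Y : ℝ → Ω → β) (μ' : Measure Ω') (Y' : ℝ → Ω' → β) : Prop :=
  ∀ (n : ℕ) (ts : Fin n → ℝ),
    Measure.map (fun ω k => Y (ts k) ω) μ = Measure.map (fun ω k => Y' (ts k) ω) μ'

/-! ## Weak derivatives and Sobolev-type conditions -/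

/-- `g` is the weak partial derivative `∂u/∂xᵢ` on the open set `Q ⊆ ℝ^d`. -/
def IsWeakDerivSpace (Q : Set (V d)) (u g : V d → ℝ) (i : Fin d) : Prop :=
  ∀ φ : V d → ℝ, ContDiff ℝ (⊤ : ℕ∞) φ → HasCompactSupport φ → tsupport φ ⊆ Q →
    (∫ x in Q, u x * fderiv ℝ φ x (Pi.single i 1)) = -∫ x in Q, g x * φ x

/-- The space-time Lebesgue measure on `ℝ × ℝ^d`. -/
def pvol (d : ℕ) : Measure (ℝ × V d) := (volume : Measure ℝ).prod (volume : Measure (V d))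

/-- `g` is the weak time derivative `∂u/∂θ` on the open space-time set `Q`. -/
def IsWeakDerivTime (Q : Set (ℝ × V d)) (u g : ℝ → V d → ℝ) : Prop :=
  ∀ φ : ℝ × V d → ℝ, ContDiff ℝ (⊤ : ℕ∞) φ → HasCompactSupport φ → tsupport φ ⊆ Q →
    (∫ z in Q, u z.1 z.2 * fderiv ℝ φ z ((1 : ℝ), (0 : V d)) ∂pvol d) =
      -∫ z in Q, g z.1 z.2 * φ z ∂pvol d

/-- `g` is the weak spatial derivative `∂u/∂xᵢ` on the open space-time set `Q`. -/
def IsWeakDerivSpaceT (Q : Set (ℝ × V d)) (u g : ℝ → V d → ℝ) (i : Fin d) : Prop :=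
  ∀ φ : ℝ × V d → ℝ, ContDiff ℝ (⊤ : ℕ∞) φ → HasCompactSupport φ → tsupport φ ⊆ Q →
    (∫ z in Q, u z.1 z.2 * fderiv ℝ φ z ((0 : ℝ), Pi.single i 1) ∂pvol d) =
      -∫ z in Q, g z.1 z.2 * φ z ∂pvol d

end RS

open RS


/-! ### Auxiliary lemmas for the proof -/

namespace RSAux

open MeasureTheory Real Set Filter

variable {d : ℕ} {U : Type} [MetricSpace U] [CompactSpace U] [MeasurableSpace U] [BorelSpace U]
variable {b : V d → U → V d} {σm : V d → Matrix (Fin d) (Fin d) ℝ} {γ : V d → V d}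
variable {G : Set (V d)} {x : V d} {rk : V d → U → ℝ} {Rk α : ℝ}

/-- The inner discounted pathwise integral. -/
def cI (sys : ControlSys G b σm γ x) (rk : V d → U → ℝ) (α : ℝ) (ω : sys.Ω) : ℝ :=
  ∫ t in Ici (0:ℝ), Real.exp (-α * t) * rk (sys.X t ω) (sys.v t ω)

lemma discCost_eq (sys : ControlSys G b σm γ x) (θ : ℝ) :
    discCost sys rk α θ = ∫ ω, Real.exp (θ * cI sys rk α ω) ∂sys.μ := rfl

lemma cI_nonneg (hrk0 : ∀ y u, 0 ≤ rk y u) (sys : ControlSys G b σm γ x) (ω : sys.Ω) :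
    0 ≤ cI sys rk α ω :=
  integral_nonneg fun t => mul_nonneg (Real.exp_pos _).le (hrk0 _ _)

lemma cI_le (hrk0 : ∀ y u, 0 ≤ rk y u) (hrkR : ∀ y u, rk y u ≤ Rk) (hα : 0 < α)
    (sys : ControlSys G b σm γ x) (ω : sys.Ω) : cI sys rk α ω ≤ Rk / α := by
  have hint : IntegrableOn (fun t => Rk * Real.exp (-α * t)) (Ici (0:ℝ)) volume := by
    rw [integrableOn_Ici_iff_integrableOn_Ioi]
    exact (exp_neg_integrableOn_Ioi 0 hα).const_mul Rk
  have hb : ∀ t : ℝ, ‖Real.exp (-α * t) * rk (sys.X t ω) (sys.v t ω)‖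
      ≤ Rk * Real.exp (-α * t) := by
    intro t
    rw [Real.norm_eq_abs, abs_of_nonneg (mul_nonneg (Real.exp_pos _).le (hrk0 _ _)), mul_comm]
    exact mul_le_mul_of_nonneg_right (hrkR _ _) (Real.exp_pos _).le
  have h1 : ‖cI sys rk α ω‖ ≤ ∫ t in Ici (0:ℝ), Rk * Real.exp (-α * t) :=
    norm_integral_le_of_norm_le hint (Filter.Eventually.of_forall hb)
  have h2 : (∫ t in Ici (0:ℝ), Rk * Real.exp (-α * t)) = Rk / α := by
    rw [integral_Ici_eq_integral_Ioi, integral_const_mul]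
    have h3 : (∫ t in Ioi (0:ℝ), Real.exp (-α * t)) = α⁻¹ := by
      calc (∫ t in Ioi (0:ℝ), Real.exp (-α * t))
          = ∫ t in Ioi (0:ℝ), (fun y => Real.exp (-y)) (α * t) := by
            simp only [neg_mul]
        _ = α⁻¹ • ∫ y in Ioi (α * 0), Real.exp (-y) :=
            integral_comp_mul_left_Ioi (fun y => Real.exp (-y)) 0 hα
        _ = α⁻¹ := by rw [mul_zero, integral_exp_neg_Ioi]; simp
    rw [h3, div_eq_mul_inv]
  rw [h2] at h1
  exact le_trans (le_abs_self _) (by rwa [Real.norm_eq_abs] at h1)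

lemma discCost_nonneg (sys : ControlSys G b σm γ x) (θ : ℝ) :
    0 ≤ discCost sys rk α θ := by
  rw [discCost_eq]
  exact integral_nonneg fun ω => (Real.exp_pos _).le

lemma discCost_le (hrk0 : ∀ y u, 0 ≤ rk y u) (hrkR : ∀ y u, rk y u ≤ Rk) (hα : 0 < α)
    {θ : ℝ} (hθ : 0 ≤ θ) (sys : ControlSys G b σm γ x) :
    discCost sys rk α θ ≤ Real.exp (θ * (Rk / α)) := by
  haveI := sys.prob
  rw [discCost_eq]
  calc (∫ ω, Real.exp (θ * cI sys rk α ω) ∂sys.μ)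
      ≤ ‖∫ ω, Real.exp (θ * cI sys rk α ω) ∂sys.μ‖ := le_abs_self _
    _ ≤ ∫ _ω, Real.exp (θ * (Rk / α)) ∂sys.μ := by
        refine norm_integral_le_of_norm_le (integrable_const _)
          (Filter.Eventually.of_forall fun ω => ?_)
        rw [Real.norm_eq_abs, abs_of_nonneg (Real.exp_pos _).le]
        exact Real.exp_le_exp.2
          (mul_le_mul_of_nonneg_left (cI_le hrk0 hrkR hα sys ω) hθ)
    _ = Real.exp (θ * (Rk / α)) := by simp
  
lemma discCost_one_le (hrk0 : ∀ y u, 0 ≤ rk y u) {θ : ℝ} (hθ : 0 ≤ θ)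
    (sys : ControlSys G b σm γ x)
    (hint : Integrable (fun ω => Real.exp (θ * cI sys rk α ω)) sys.μ) :
    1 ≤ discCost sys rk α θ := by
  haveI := sys.prob
  rw [discCost_eq]
  calc (1:ℝ) = ∫ _ω, (1:ℝ) ∂sys.μ := by simp
    _ ≤ ∫ ω, Real.exp (θ * cI sys rk α ω) ∂sys.μ :=
        integral_mono (integrable_const 1) hint fun ω =>
          Real.one_le_exp (mul_nonneg hθ (cI_nonneg hrk0 sys ω))

lemma discCost_eq_zero {θ : ℝ} (sys : ControlSys G b σm γ x)
    (hnot : ¬ Integrable (fun ω => Real.exp (θ * cI sys rk α ω)) sys.μ) :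
    discCost sys rk α θ = 0 := by
  rw [discCost_eq]
  exact integral_undef hnot

lemma integrable_transfer (hrk0 : ∀ y u, 0 ≤ rk y u) (hrkR : ∀ y u, rk y u ≤ Rk)
    (hα : 0 < α) {s t : ℝ} (hs : 0 < s) (ht : 0 < t) (sys : ControlSys G b σm γ x)
    (hint : Integrable (fun ω => Real.exp (s * cI sys rk α ω)) sys.μ) :
    Integrable (fun ω => Real.exp (t * cI sys rk α ω)) sys.μ := by
  haveI := sys.prob
  have hIm : AEMeasurable (fun ω => cI sys rk α ω) sys.μ := by
    have heq : (fun ω => cI sys rk α ω)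
        = fun ω => Real.log (Real.exp (s * cI sys rk α ω)) / s := by
      funext ω; rw [Real.log_exp, mul_div_cancel_left₀ _ hs.ne']
    rw [heq]
    exact (Real.measurable_log.comp_aemeasurable hint.1.aemeasurable).div_const s
  refine Integrable.mono' (integrable_const (Real.exp (t * (Rk / α))))
    ((Real.measurable_exp.comp_aemeasurable (hIm.const_mul t)).aestronglyMeasurable)
    (Filter.Eventually.of_forall fun ω => ?_)
  rw [Real.norm_eq_abs, abs_of_nonneg (Real.exp_pos _).le]
  exact Real.exp_le_exp.2 (mul_le_mul_of_nonneg_left (cI_le hrk0 hrkR hα sys ω) ht.le)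

lemma discCost_mono (hrk0 : ∀ y u, 0 ≤ rk y u) (hrkR : ∀ y u, rk y u ≤ Rk)
    (hα : 0 < α) {s t : ℝ} (hs : 0 < s) (hst : s ≤ t) (sys : ControlSys G b σm γ x) :
    discCost sys rk α s ≤ discCost sys rk α t := by
  by_cases hint : Integrable (fun ω => Real.exp (t * cI sys rk α ω)) sys.μ
  · have hints := integrable_transfer hrk0 hrkR hα (hs.trans_le hst) hs sys hint
    rw [discCost_eq, discCost_eq]
    exact integral_mono hints hint fun ω =>
      Real.exp_le_exp.2 (mul_le_mul_of_nonneg_right hst (cI_nonneg hrk0 sys ω))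
  · have hints : ¬ Integrable (fun ω => Real.exp (s * cI sys rk α ω)) sys.μ :=
      fun h => hint (integrable_transfer hrk0 hrkR hα hs (hs.trans_le hst) sys h)
    rw [discCost_eq, discCost_eq, integral_undef hint, integral_undef hints]

lemma discCost_mul (hrk0 : ∀ y u, 0 ≤ rk y u) (hrkR : ∀ y u, rk y u ≤ Rk)
    (hα : 0 < α) {s t : ℝ} (hs : 0 < s) (hst : s ≤ t) (sys : ControlSys G b σm γ x) :
    discCost sys rk α t ≤ Real.exp ((t - s) * (Rk / α)) * discCost sys rk α s := by
  by_cases hints : Integrable (fun ω => Real.exp (s * cI sys rk α ω)) sys.μ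
  · have hintt := integrable_transfer hrk0 hrkR hα hs (hs.trans_le hst) sys hints
    rw [discCost_eq, discCost_eq, ← integral_const_mul]
    refine integral_mono hintt (hints.const_mul _) fun ω => ?_
    have h1 : t * cI sys rk α ω = (t - s) * cI sys rk α ω + s * cI sys rk α ω := by ring
    rw [h1, Real.exp_add]
    exact mul_le_mul_of_nonneg_right
      (Real.exp_le_exp.2 (mul_le_mul_of_nonneg_left (cI_le hrk0 hrkR hα sys ω)
        (sub_nonneg.2 hst))) (Real.exp_pos _).le
  · have hintt : ¬ Integrable (fun ω => Real.exp (t * cI sys rk α ω)) sys.μ :=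
      fun h => hints (integrable_transfer hrk0 hrkR hα (hs.trans_le hst) hs sys h)
    rw [discCost_eq, discCost_eq, integral_undef hintt, integral_undef hints, mul_zero]

end RSAux

open RSAux

/-- **Uniform bound on the normalised logarithmic value** (estimate (3.5), after
Lemma 2.1 of Biswas–Borkar–Suresh).  Let `r_k = r·χ_k` be the truncated running cost,
`u^k_α` the corresponding discounted risk-sensitive value and
`φ^k_α = (1/θ) ln u^k_α`.  Then
`‖α φ^k_α‖_∞ + ‖α θ ∂φ^k_α/∂θ‖_∞ ≤ 3 ‖r_k‖_∞` for all `0 < α < 1`, `0 < θ ≤ 1`. -/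
theorem truncated_log_value_bound
    {d : ℕ} {U : Type} [MetricSpace U] [CompactSpace U] [MeasurableSpace U] [BorelSpace U]
    (b : V d → U → V d) (σm : V d → Matrix (Fin d) (Fin d) ℝ) (γ : V d → V d)
    (hA1 : A1 b σm) (hA2 : A2 γ)
    (r : V d → U → ℝ) (R : ℝ) (hr : CostA r R) (k : ℕ)
    (χ : V d → ℝ) (hχ_smooth : ContDiff ℝ (⊤ : ℕ∞) χ)
    (hχ01 : ∀ x, χ x ∈ Set.Icc (0 : ℝ) 1)
    (hχ_one : ∀ x : V d, eNorm x ≤ k → χ x = 1)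
    (hχ_zero : ∀ x : V d, (k : ℝ) + 1 ≤ eNorm x → χ x = 0)
    (Rk : ℝ) (hRk : IsLUB (Set.range fun p : V d × U => r p.1 p.2 * χ p.1) Rk) :
    ∀ α ∈ Set.Ioo (0 : ℝ) 1, ∀ θ ∈ Set.Ioc (0 : ℝ) 1, ∀ θ' ∈ Set.Ioc (0 : ℝ) 1,
      ∀ x ∈ Dbar d, ∀ x' ∈ Dbar d,
      |α * ((1 / θ) * Real.log
          (discValue (orthant d) b σm γ (fun y u => r y u * χ y) α θ x))| +
        |α * θ' * deriv (fun s => (1 / s) * Real.log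
          (discValue (orthant d) b σm γ (fun y u => r y u * χ y) α s x')) θ'|
        ≤ 3 * Rk := by
  classical
  intro α hα θ hθ θ' hθ' x hx x' hx'
  obtain ⟨hα0, hα1⟩ := hα
  obtain ⟨hθ0, hθ1⟩ := hθ
  obtain ⟨hθ'0, hθ'1⟩ := hθ'
  set rk : V d → U → ℝ := fun y u => r y u * χ y with hrkdef
  rcases isEmpty_or_nonempty U with hU | hU
  · exfalso
    have hempty : (Set.range fun p : V d × U => r p.1 p.2 * χ p.1) = ∅ :=
      Set.range_eq_empty _
    rw [hempty] at hRk
    have h1 : Rk ≤ Rk - 1 := hRk.2 fun a ha => absurd ha (Set.notMem_empty a)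
    linarith
  have hrk0 : ∀ y u, 0 ≤ rk y u := fun y u => mul_nonneg (hr.nonneg y u) (hχ01 y).1
  have hrkR : ∀ y u, rk y u ≤ Rk := fun y u => hRk.1 ⟨(y, u), rfl⟩
  have hRk0 : 0 ≤ Rk := by
    obtain ⟨u⟩ := hU
    exact le_trans (hrk0 (fun _ => 0) u) (hrkR _ u)
  set Q := Rk / α with hQdef
  have hQ0 : 0 ≤ Q := div_nonneg hRk0 hα0.le
  -- ### Bound on the first term
  have hterm1 : |α * ((1 / θ) * Real.log
      (discValue (orthant d) b σm γ rk α θ x))| ≤ Rk := by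
    set S : Set ℝ :=
      {c | ∃ sys : ControlSys (orthant d) b σm γ x, c = discCost sys rk α θ} with hS
    have huv : discValue (orthant d) b σm γ rk α θ x = sInf S := rfl
    have hSlb : ∀ c ∈ S, (0:ℝ) ≤ c := by
      rintro c ⟨sys, rfl⟩; exact RSAux.discCost_nonneg sys θ
    have hbdd : BddBelow S := ⟨0, hSlb⟩
    have hlog : 0 ≤ Real.log (sInf S) ∧ Real.log (sInf S) ≤ θ * Q := by
      rcases Set.eq_empty_or_nonempty S with hSe | hSne
      · rw [hSe, Real.sInf_empty, Real.log_zero]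
        exact ⟨le_refl 0, by positivity⟩
      · by_cases h0 : (0:ℝ) ∈ S
        · have hz : sInf S = 0 := le_antisymm (csInf_le hbdd h0) (le_csInf hSne hSlb)
          rw [hz, Real.log_zero]
          exact ⟨le_refl 0, by positivity⟩
        · have h1le : ∀ c ∈ S, (1:ℝ) ≤ c := by
            rintro c ⟨sys, rfl⟩
            by_cases hint : Integrable (fun ω => Real.exp (θ * cI sys rk α ω)) sys.μ
            · exact RSAux.discCost_one_le hrk0 hθ0.le sys hint
            · exact absurd (⟨sys, (RSAux.discCost_eq_zero sys hint).symm⟩ : (0:ℝ) ∈ S) h0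
          have hge1 : 1 ≤ sInf S := le_csInf hSne h1le
          obtain ⟨c, sys, rfl⟩ := hSne
          have hle : sInf S ≤ Real.exp (θ * Q) :=
            le_trans (csInf_le hbdd ⟨sys, rfl⟩)
              (RSAux.discCost_le hrk0 hrkR hα0 hθ0.le sys)
          refine ⟨Real.log_nonneg hge1, ?_⟩
          calc Real.log (sInf S) ≤ Real.log (Real.exp (θ * Q)) :=
              Real.log_le_log (by linarith) hle
            _ = θ * Q := Real.log_exp _
    rw [huv]
    have hnn : 0 ≤ α * ((1 / θ) * Real.log (sInf S)) :=
      mul_nonneg hα0.le (mul_nonneg (by positivity) hlog.1)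
    rw [abs_of_nonneg hnn]
    have h2 : (1 / θ) * Real.log (sInf S) ≤ (1 / θ) * (θ * Q) :=
      mul_le_mul_of_nonneg_left hlog.2 (by positivity)
    have h3 : (1 / θ) * (θ * Q) = Q := by field_simp
    have h4 : α * Q = Rk := by rw [hQdef]; field_simp
    calc α * ((1 / θ) * Real.log (sInf S)) ≤ α * Q :=
        mul_le_mul_of_nonneg_left (h3 ▸ h2) hα0.le
      _ = Rk := h4
  -- ### Bound on the second term
  have hterm2 : |α * θ' * deriv (fun s => (1 / s) * Real.log
      (discValue (orthant d) b σm γ rk α s x')) θ'| ≤ 2 * Rk := by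
    set g : ℝ → ℝ := fun s => (1 / s) * Real.log
      (discValue (orthant d) b σm γ rk α s x') with hg
    by_cases hbad : ∀ s : ℝ, 0 < s → discValue (orthant d) b σm γ rk α s x' = 0
    · have hev : g =ᶠ[nhds θ'] fun _ => (0:ℝ) := by
        filter_upwards [Ioi_mem_nhds hθ'0] with s hs
        simp [hg, hbad s hs]
      rw [hev.deriv_eq, deriv_const]
      simp only [mul_zero, abs_zero]
      linarith
    · push_neg at hbad
      obtain ⟨s₀, hs₀pos, hs₀ne⟩ := hbad
      set S : ℝ → Set ℝ := fun s =>
        {c | ∃ sys : ControlSys (orthant d) b σm γ x', c = discCost sys rk α s} with hSdef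
      have huv : ∀ s, discValue (orthant d) b σm γ rk α s x' = sInf (S s) := fun s => rfl
      have hSlb : ∀ s, ∀ c ∈ S s, (0:ℝ) ≤ c := by
        rintro s c ⟨sys, rfl⟩; exact RSAux.discCost_nonneg sys s
      have hbdd : ∀ s, BddBelow (S s) := fun s => ⟨0, hSlb s⟩
      have hSys : Nonempty (ControlSys (orthant d) b σm γ x') := by
        by_contra hno
        apply hs₀ne
        rw [huv s₀]
        have hSe : S s₀ = ∅ := by
          ext c
          simp only [hSdef, Set.mem_setOf_eq, Set.mem_empty_iff_false, iff_false]
          rintro ⟨sys, -⟩; exact hno ⟨sys⟩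
        rw [hSe, Real.sInf_empty]
      have hSne : ∀ s : ℝ, (S s).Nonempty := fun s => ⟨_, hSys.some, rfl⟩
      have hinf0 : ∀ s, 0 ≤ sInf (S s) := fun s => le_csInf (hSne s) (hSlb s)
      have hintall : ∀ (sys : ControlSys (orthant d) b σm γ x') (s : ℝ), 0 < s →
          Integrable (fun ω => Real.exp (s * cI sys rk α ω)) sys.μ := by
        intro sys s hs
        have hint0 : Integrable (fun ω => Real.exp (s₀ * cI sys rk α ω)) sys.μ := by
          by_contra hnot
          apply hs₀ne
          rw [huv s₀]
          have h0mem : (0:ℝ) ∈ S s₀ := ⟨sys, (RSAux.discCost_eq_zero sys hnot).symm⟩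
          exact le_antisymm (csInf_le (hbdd s₀) h0mem) (hinf0 s₀)
        exact RSAux.integrable_transfer hrk0 hrkR hα0 hs₀pos hs sys hint0
      have hu1 : ∀ s : ℝ, 0 < s → 1 ≤ sInf (S s) := by
        intro s hs
        refine le_csInf (hSne s) ?_
        rintro c ⟨sys, rfl⟩
        exact RSAux.discCost_one_le hrk0 hs.le sys (hintall sys s hs)
      have hu2 : ∀ s : ℝ, 0 < s → sInf (S s) ≤ Real.exp (s * Q) := fun s hs =>
        le_trans (csInf_le (hbdd s) ⟨hSys.some, rfl⟩)
          (RSAux.discCost_le hrk0 hrkR hα0 hs.le hSys.some)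
      have hmono : ∀ s t : ℝ, 0 < s → s ≤ t → sInf (S s) ≤ sInf (S t) := by
        intro s t hs hst
        refine le_csInf (hSne t) ?_
        rintro c ⟨sys, rfl⟩
        exact le_trans (csInf_le (hbdd s) ⟨sys, rfl⟩)
          (RSAux.discCost_mono hrk0 hrkR hα0 hs hst sys)
      have hmul : ∀ s t : ℝ, 0 < s → s ≤ t →
          sInf (S t) ≤ Real.exp ((t - s) * Q) * sInf (S s) := by
        intro s t hs hst
        rw [← div_le_iff₀' (Real.exp_pos _)]
        refine le_csInf (hSne s) ?_
        rintro c ⟨sys, rfl⟩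
        rw [div_le_iff₀' (Real.exp_pos _)]
        exact le_trans (csInf_le (hbdd t) ⟨sys, rfl⟩)
          (RSAux.discCost_mul hrk0 hrkR hα0 hs hst sys)
      set h : ℝ → ℝ := fun s => Real.log (sInf (S s)) with hh
      have hgdef : ∀ s, g s = (1 / s) * h s := fun s => rfl
      have hpos : ∀ s : ℝ, 0 < s → 0 < sInf (S s) := fun s hs =>
        lt_of_lt_of_le zero_lt_one (hu1 s hs)
      have hB0 : 0 ≤ h θ' := Real.log_nonneg (hu1 θ' hθ'0)
      have hB2 : h θ' ≤ θ' * Q := by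
        calc h θ' ≤ Real.log (Real.exp (θ' * Q)) :=
            Real.log_le_log (hpos θ' hθ'0) (hu2 θ' hθ'0)
          _ = θ' * Q := Real.log_exp _
      by_cases hdiff : DifferentiableAt ℝ g θ'
      · set L := 2 * Q / θ' with hL
        have hslope : Tendsto (slope g θ') (nhdsWithin θ' (Ioi θ')) (nhds (deriv g θ')) :=
          (hasDerivAt_iff_tendsto_slope.1 hdiff.hasDerivAt).mono_left
            (nhdsWithin_mono θ' fun y hy => ne_of_gt hy)
        have hbdslope : ∀ᶠ t in nhdsWithin θ' (Ioi θ'), |slope g θ' t| ≤ L := by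
          filter_upwards [self_mem_nhdsWithin] with t ht
          have htθ : θ' < t := ht
          have ht0 : 0 < t := hθ'0.trans htθ
          have hA1 : h θ' ≤ h t :=
            Real.log_le_log (hpos θ' hθ'0) (hmono θ' t hθ'0 htθ.le)
          have hA2 : h t ≤ h θ' + (t - θ') * Q := by
            have h5 : h t ≤ Real.log (Real.exp ((t - θ') * Q) * sInf (S θ')) :=
              Real.log_le_log (hpos t ht0) (hmul θ' t hθ'0 htθ.le)
            rw [Real.log_mul (Real.exp_ne_zero _) (hpos θ' hθ'0).ne',
              Real.log_exp] at h5
            linarith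
          have hgt : g t - g θ' = (h t * θ' - h θ' * t) / (t * θ') := by
            rw [hgdef t, hgdef θ']
            field_simp
          have hden : (0:ℝ) < t * θ' * (t - θ') :=
            mul_pos (mul_pos ht0 hθ'0) (sub_pos.2 htθ)
          rw [slope_def_field, hgt, div_div, abs_div, abs_of_pos hden,
            div_le_iff₀ hden]
          have hRHS : L * (t * θ' * (t - θ')) = 2 * Q * t * (t - θ') := by
            rw [hL]; field_simp
          rw [hRHS, abs_le]
          constructor
          · nlinarith [mul_nonneg hB0 (sub_pos.2 htθ).le,
              mul_nonneg (mul_nonneg hQ0 ht0.le) (sub_pos.2 htθ).le,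
              mul_nonneg hQ0 (sq_nonneg (t - θ')),
              mul_le_mul_of_nonneg_right hA2 hθ'0.le]
          · nlinarith [mul_le_mul_of_nonneg_right hA1 hθ'0.le,
              mul_nonneg (mul_nonneg hQ0 ht0.le) (sub_pos.2 htθ).le,
              mul_le_mul_of_nonneg_right hB2 (sub_pos.2 htθ).le,
              mul_nonneg hQ0 (sq_nonneg (t - θ'))]
        have hDle : |deriv g θ'| ≤ L := le_of_tendsto hslope.abs hbdslope
        have hfin : α * θ' * L = 2 * Rk := by
          rw [hL, hQdef]; field_simp
        have habs : |α * θ' * deriv g θ'| = α * θ' * |deriv g θ'| := by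
          rw [abs_mul, abs_of_nonneg (mul_nonneg hα0.le hθ'0.le)]
        rw [habs]
        calc α * θ' * |deriv g θ'|
            ≤ α * θ' * L :=
            mul_le_mul_of_nonneg_left hDle (mul_nonneg hα0.le hθ'0.le)
          _ = 2 * Rk := hfin
      · rw [deriv_zero_of_not_differentiableAt hdiff]
        simp only [mul_zero, abs_zero]
        linarith
  linarith
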